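/- arXiv:1712.01979 — 3 statements merged into one kernel-verified Lean document; each statement's English description precedes it below -/
import Mathlib

section
/- For an odd prime p and any e ≥ 1, in 𝔽_p[λ] one has H{(p^e−1)/2} = H{(p−1)/2}^{1 + p + ⋯ + p^{e−1}}. -/
/-!
Lucas' theorem gives `C(a + p b, i + p j) ≡ C(a, i) C(b, j) mod p` for `a, i < p`, hence
`H{a + p b}(λ) = H{a}(λ) · H{b}(λ^p) = H{a}(λ) · H{b}(λ)^p` in `𝔽_p[λ]`. Since
`(p^(e+1) - 1)/2 = (p - 1)/2 + p (p^e - 1)/2`, induction on `e` gives the claim.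
-/

open Polynomial Finset

noncomputable def deuring (R : Type*) [CommRing R] (n : ℕ) : Polynomial R :=
  ∑ i ∈ Finset.range (n + 1), Polynomial.C ((n.choose i : R) ^ 2) * Polynomial.X ^ i

theorem Finset.sum_range_mul {M : Type*} [AddCommMonoid M] (f : ℕ → M) (p n : ℕ) :
    ∑ k ∈ range (p * n), f k = ∑ i ∈ range p, ∑ j ∈ range n, f (i + p * j) := by
  induction n with
  | zero => simp
  | succ n ih =>
    rw [mul_add_one, sum_range_add, ih, ← sum_add_distrib]
    simp only [sum_range_succ, add_comm]

/-- Lucas' theorem, read in a ring of characteristic `p`. -/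
theorem cast_choose_add_mul_add_mul (R : Type*) [CommRing R] {p : ℕ} [Fact p.Prime] [CharP R p]
    {a i : ℕ} (b j : ℕ) (ha : a < p) (hi : i < p) :
    ((a + p * b).choose (i + p * j) : R) = a.choose i * b.choose j := by
  have hp : 0 < p := (Fact.out : p.Prime).pos
  have lucas := Choose.choose_modEq_choose_mod_mul_choose_div_nat (p := p)
    (n := a + p * b) (k := i + p * j)
  simp only [Nat.add_mul_mod_self_left, Nat.mod_eq_of_lt, Nat.add_mul_div_left _ _ hp,
    Nat.div_eq_of_lt, ha, hi, zero_add] at lucas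
  exact_mod_cast (CharP.natCast_eq_natCast R p).mpr lucas

section Deuring

variable (R : Type*) [CommRing R]

@[simp]
theorem deuring_zero : deuring R 0 = 1 := by
  simp [deuring]

theorem deuring_eq_sum_range_of_lt {n m : ℕ} (h : n < m) :
    deuring R n = ∑ i ∈ range m, C ((n.choose i : R) ^ 2) * X ^ i := by
  refine sum_subset (fun i hi ↦ ?_) fun i _ hi ↦ ?_
  · simp only [mem_range] at hi ⊢
    omega
  · rw [Nat.choose_eq_zero_of_lt (by simpa using hi)]
    simp

theorem expand_deuring (p n : ℕ) :
    expand R p (deuring R n) =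
      ∑ j ∈ range (n + 1), C ((n.choose j : R) ^ 2) * X ^ (p * j) := by
  simp only [deuring, map_sum, map_mul, expand_C, map_pow, expand_X, ← pow_mul]

theorem deuring_add_mul {p : ℕ} [Fact p.Prime] [CharP R p] {a : ℕ} (b : ℕ) (ha : a < p) :
    deuring R (a + p * b) = deuring R a * expand R p (deuring R b) := by
  have hlt : a + p * b < p * (b + 1) := by rw [mul_add_one]; omega
  rw [deuring_eq_sum_range_of_lt R hlt, deuring_eq_sum_range_of_lt R ha, expand_deuring,
    sum_range_mul, sum_mul_sum]
  refine sum_congr rfl fun i hi ↦ sum_congr rfl fun j _ ↦ ?_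
  rw [cast_choose_add_mul_add_mul R b j ha (mem_range.mp hi), mul_pow, map_mul, pow_add]
  ring

end Deuring

theorem Odd.sub_one_div_two_pow_succ {p : ℕ} (hp : Odd p) (e : ℕ) :
    (p ^ (e + 1) - 1) / 2 = (p - 1) / 2 + p * ((p ^ e - 1) / 2) := by
  obtain ⟨l, hl⟩ := hp.pow (n := e)
  obtain ⟨k, rfl⟩ := hp
  rw [pow_succ', hl, show (2 * k + 1) * (2 * l + 1) = 2 * (k + (2 * k + 1) * l) + 1 by ring]
  simp only [Nat.add_sub_cancel, Nat.mul_div_cancel_left _ two_pos]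

theorem deuring_pow_e_general (p : ℕ) (hp : p.Prime) (hodd : Odd p) (e : ℕ) :
    deuring (ZMod p) ((p ^ e - 1) / 2) =
      (deuring (ZMod p) ((p - 1) / 2)) ^ (∑ i ∈ Finset.range e, p ^ i) := by
  have : Fact p.Prime := ⟨hp⟩
  induction e with
  | zero => simp
  | succ e ih =>
    have hlt : (p - 1) / 2 < p := by have := hp.pos; omega
    rw [hodd.sub_one_div_two_pow_succ, deuring_add_mul _ _ hlt, ih, map_pow, ZMod.expand_card,
      ← pow_mul, geom_sum_succ, ← pow_succ']

theorem deuring_pow_e (p : ℕ) (hp : p.Prime) (hodd : Odd p) (e : ℕ) (he : 1 ≤ e) :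
    deuring (ZMod p) ((p ^ e - 1) / 2) =
      (deuring (ZMod p) ((p - 1) / 2)) ^ (∑ i ∈ Finset.range e, p ^ i) :=
  deuring_pow_e_general p hp hodd e
end

section
/- Let K be an algebraically closed field of characteristic 2 and a ∈ K with a ≠ 0 and a ≠ 1. Then the F-pure threshold of f = xy(x+y)(x+ay) at the origin equals 1/2. -/
open MvPolynomial Finset

/-- The F-pure threshold at the origin of a bivariate polynomial over a field of
characteristic `p`: `sup { N/p^e : f^N ∉ (x^{p^e}, y^{p^e}) }`. -/
noncomputable def fpt (p : ℕ) {K : Type*} [Field K] (f : MvPolynomial (Fin 2) K) : ℝ :=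
  sSup {r : ℝ | ∃ N e : ℕ, 0 < N ∧ 0 < e ∧ r = (N : ℝ) / (p : ℝ) ^ e ∧
    f ^ N ∉ Ideal.span {(MvPolynomial.X 0 : MvPolynomial (Fin 2) K) ^ p ^ e,
      (MvPolynomial.X 1 : MvPolynomial (Fin 2) K) ^ p ^ e}}

/-!
Write `f = xy · g` with `g = x² + (a+1)xy + ay²`. Since `f` is homogeneous of degree 4, every
monomial of `f^N` has degree `4N`, so `f^N ∈ (x^q, y^q)` once `4N ≥ 2q - 1`; hence `fpt f ≤ 1/2`.
Conversely, for `N = 2^e - 1` the Frobenius writes `g^N` as the product of the twists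
`x^(2^(i+1)) + (a+1)^(2^i) (xy)^(2^i) + a^(2^i) y^(2^(i+1))`, `i < e`, and by uniqueness of binary
expansions `x^N y^N` only arises from the middle terms, with coefficient `(a+1)^N ≠ 0`. So
`x^(2N) y^(2N)` survives in `f^N` modulo `(x^(2^(e+1)), y^(2^(e+1)))`, and `N / 2^(e+1) → 1/2`.
-/

open Filter Topology

section Bivariate

variable {R : Type*} [CommSemiring R]

noncomputable def diagExp (n : ℕ) : Fin 2 →₀ ℕ := Finsupp.single 0 n + Finsupp.single 1 n

@[simp]
lemma diagExp_apply_zero (n : ℕ) : diagExp n 0 = n := by simp [diagExp]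

@[simp]
lemma diagExp_apply_one (n : ℕ) : diagExp n 1 = n := by simp [diagExp]

lemma diagExp_add (m n : ℕ) : diagExp (m + n) = diagExp m + diagExp n := by
  simp only [diagExp, Finsupp.single_add]
  abel

lemma monomial_diagExp (n : ℕ) (r : R) :
    monomial (diagExp n) r = C r * (X 0 * X 1 : MvPolynomial (Fin 2) R) ^ n := by
  rw [mul_pow, X_pow_eq_monomial, X_pow_eq_monomial, monomial_mul, one_mul, C_mul_monomial,
    mul_one, diagExp]

lemma mem_span_X_pow_iff (q : ℕ) (p : MvPolynomial (Fin 2) R) :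
    p ∈ Ideal.span {X 0 ^ q, X 1 ^ q} ↔ ∀ m ∈ p.support, q ≤ m 0 ∨ q ≤ m 1 := by
  have h : ({X 0 ^ q, X 1 ^ q} : Set (MvPolynomial (Fin 2) R)) =
      (fun s => monomial s (1 : R)) '' {Finsupp.single 0 q, Finsupp.single 1 q} := by
    rw [Set.image_insert_eq, Set.image_singleton, X_pow_eq_monomial, X_pow_eq_monomial]
  rw [h, mem_ideal_span_monomial_image]
  simp [Finsupp.single_le_iff]

lemma MvPolynomial.IsHomogeneous.mem_span_X_pow {p : MvPolynomial (Fin 2) R} {d q : ℕ}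
    (hp : p.IsHomogeneous d) (hq : 2 * q ≤ d + 1) : p ∈ Ideal.span {X 0 ^ q, X 1 ^ q} := by
  refine (mem_span_X_pow_iff q p).2 fun m hm => ?_
  have hdeg : m 0 + m 1 = d := by
    rw [← Fin.sum_univ_two (f := m), ← Finsupp.degree_eq_sum]
    by_contra h
    exact mem_support_iff.mp hm (hp.coeff_eq_zero h)
  omega

end Bivariate

section CharTwo

variable {R : Type*} [CommSemiring R] [CharP R 2]

lemma quadratic_pow_two_pow (b c : R) (e : ℕ) :
    (X 0 ^ 2 + C b * (X 0 * X 1) + C c * X 1 ^ 2 : MvPolynomial (Fin 2) R) ^ 2 ^ e =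
      monomial (Finsupp.single 0 (2 ^ (e + 1))) 1 + monomial (diagExp (2 ^ e)) (b ^ 2 ^ e) +
        monomial (Finsupp.single 1 (2 ^ (e + 1))) (c ^ 2 ^ e) := by
  rw [← X_pow_eq_monomial, ← C_mul_X_pow_eq_monomial, monomial_diagExp, add_pow_char_pow,
    add_pow_char_pow, map_pow, map_pow]
  ring

lemma coeff_diagExp_quadratic_pow (b c : R) (e : ℕ) :
    coeff (diagExp (2 ^ e - 1))
      ((X 0 ^ 2 + C b * (X 0 * X 1) + C c * X 1 ^ 2 : MvPolynomial (Fin 2) R) ^ (2 ^ e - 1))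
      = b ^ (2 ^ e - 1) := by
  induction e with
  | zero => simp [diagExp]
  | succ e ih =>
    have hsplit : 2 ^ (e + 1) - 1 = (2 ^ e - 1) + 2 ^ e := by
      have := Nat.one_le_two_pow (n := e)
      rw [pow_succ]; omega
    have hlarge (i : Fin 2) :
        ¬ Finsupp.single i (2 ^ (e + 1)) ≤ diagExp (2 ^ e - 1) + diagExp (2 ^ e) := by
      rw [Finsupp.single_le_iff, ← diagExp_add, ← hsplit]
      fin_cases i <;> simp
    rw [hsplit, pow_add, quadratic_pow_two_pow, diagExp_add, mul_add, mul_add, coeff_add,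
      coeff_add, coeff_mul_monomial, ih, coeff_mul_monomial', coeff_mul_monomial',
      if_neg (hlarge 0), if_neg (hlarge 1), ← pow_add, zero_add, add_zero]

end CharTwo

section FourLines

variable {R : Type*}

noncomputable def fourLines [CommSemiring R] (a : R) : MvPolynomial (Fin 2) R :=
  X 0 * X 1 * (X 0 + X 1) * (X 0 + C a * X 1)

lemma fourLines_eq_mul_quadratic [CommSemiring R] (a : R) :
    fourLines a = X 0 * X 1 * (X 0 ^ 2 + C (a + 1) * (X 0 * X 1) + C a * X 1 ^ 2) := by
  rw [fourLines, map_add, map_one]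
  ring

lemma isHomogeneous_fourLines [CommSemiring R] (a : R) :
    (fourLines a).IsHomogeneous 4 := by
  have hX (i : Fin 2) : (X i : MvPolynomial (Fin 2) R).IsHomogeneous 1 := isHomogeneous_X R i
  exact (((hX 0).mul (hX 1)).mul ((hX 0).add (hX 1))).mul ((hX 0).add ((hX 1).C_mul a))

lemma fourLines_pow_notMem_span [CommRing R] [NoZeroDivisors R] [CharP R 2] {a : R}
    (ha : a ≠ 1) (e : ℕ) :
    fourLines a ^ (2 ^ e - 1) ∉ Ideal.span {X 0 ^ 2 ^ (e + 1), X 1 ^ 2 ^ (e + 1)} := by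
  set N := 2 ^ e - 1 with hN
  have hcoeff : coeff (diagExp (N + N)) (fourLines a ^ N) = (a + 1) ^ N := by
    rw [fourLines_eq_mul_quadratic, mul_pow, ← one_mul ((X 0 * X 1) ^ N), ← map_one C,
      ← monomial_diagExp, mul_comm, diagExp_add, coeff_mul_monomial, hN,
      coeff_diagExp_quadratic_pow, mul_one]
  have hunit : (a + 1) ^ N ≠ 0 := pow_ne_zero N (ha ∘ CharTwo.add_eq_zero.1)
  have hsmall : N + N < 2 ^ (e + 1) := by
    have := Nat.one_le_two_pow (n := e)
    rw [pow_succ]; omega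
  rw [mem_span_X_pow_iff]
  intro h
  have := h (diagExp (N + N)) (mem_support_iff.2 (hcoeff ▸ hunit))
  simp only [diagExp_apply_zero, diagExp_apply_one, or_self] at this
  omega

end FourLines

section FPureThreshold

variable {K : Type*} [Field K] {p d : ℕ} {f : MvPolynomial (Fin 2) K}

lemma MvPolynomial.IsHomogeneous.div_le_of_pow_notMem_span (hf : f.IsHomogeneous d) (hd : 0 < d)
    {N e : ℕ} (hN : f ^ N ∉ Ideal.span {X 0 ^ p ^ e, X 1 ^ p ^ e}) :
    (N : ℝ) / p ^ e ≤ 2 / d := by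
  have hlt : N * d < 2 * p ^ e := by
    by_contra! h
    exact hN ((hf.pow N).mem_span_X_pow (by rw [mul_comm d N]; omega))
  have hpe : (0 : ℝ) < p ^ e := by exact_mod_cast (by omega : 0 < p ^ e)
  rw [div_le_div_iff₀ hpe (by positivity)]
  exact_mod_cast (by omega : N * d ≤ 2 * p ^ e)

lemma MvPolynomial.IsHomogeneous.fpt_le (hf : f.IsHomogeneous d) (hd : 0 < d) :
    fpt p f ≤ 2 / d :=
  Real.sSup_le (by rintro _ ⟨N, e, -, -, rfl, hN⟩; exact hf.div_le_of_pow_notMem_span hd hN)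
    (by positivity)

lemma MvPolynomial.IsHomogeneous.div_le_fpt (hf : f.IsHomogeneous d) (hd : 0 < d) {N e : ℕ}
    (hN0 : 0 < N) (he : 0 < e) (hN : f ^ N ∉ Ideal.span {X 0 ^ p ^ e, X 1 ^ p ^ e}) :
    (N : ℝ) / p ^ e ≤ fpt p f :=
  le_csSup ⟨2 / d, by rintro _ ⟨N, e, -, -, rfl, hN⟩; exact hf.div_le_of_pow_notMem_span hd hN⟩
    ⟨N, e, hN0, he, rfl, hN⟩

end FPureThreshold

theorem fpt_deg_four_char_two_general (K : Type*) [Field K] [CharP K 2]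
    (a : K) (ha1 : a ≠ 1) :
    fpt 2 (MvPolynomial.X 0 * MvPolynomial.X 1 * (MvPolynomial.X 0 + MvPolynomial.X 1) *
        (MvPolynomial.X 0 + MvPolynomial.C a * MvPolynomial.X 1) : MvPolynomial (Fin 2) K)
      = 1 / 2 := by
  change fpt 2 (fourLines a) = 1 / 2
  have hf := isHomogeneous_fourLines a
  refine le_antisymm ((hf.fpt_le four_pos).trans_eq (by norm_num)) ?_
  have hlower (e : ℕ) : 1 / 2 - (1 / 2 : ℝ) ^ (e + 2) ≤ fpt 2 (fourLines a) := by
    have hN0 : 0 < 2 ^ (e + 1) - 1 := by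
      have := Nat.one_lt_two_pow (Nat.succ_ne_zero e); omega
    convert hf.div_le_fpt four_pos hN0 (e + 1).succ_pos (fourLines_pow_notMem_span ha1 (e + 1))
      using 1
    rw [Nat.cast_sub Nat.one_le_two_pow, Nat.succ_eq_add_one]
    push_cast
    rw [one_div_pow]
    field_simp
    ring
  have hlim : Tendsto (fun e : ℕ => 1 / 2 - (1 / 2 : ℝ) ^ (e + 2)) atTop (𝓝 (1 / 2)) := by
    have h := (tendsto_pow_atTop_nhds_zero_of_lt_one (r := (1 / 2 : ℝ)) (by norm_num)
      (by norm_num)).comp (tendsto_add_atTop_nat 2)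
    simpa using tendsto_const_nhds.sub h
  exact le_of_tendsto' hlim hlower

theorem fpt_deg_four_char_two (K : Type*) [Field K] [IsAlgClosed K] [CharP K 2]
    (a : K) (ha0 : a ≠ 0) (ha1 : a ≠ 1) :
    fpt 2 (MvPolynomial.X 0 * MvPolynomial.X 1 * (MvPolynomial.X 0 + MvPolynomial.X 1) *
        (MvPolynomial.X 0 + MvPolynomial.C a * MvPolynomial.X 1) : MvPolynomial (Fin 2) K)
      = 1 / 2 :=
  fpt_deg_four_char_two_general K a ha1
end

section
/- Fix a prime p > 2 and positive integers b, c with p ≡ 1 (mod b+c). For a ∈ 𝔽̄_p ∖ {0,1}, H{b(p−1)/(b+c)}(a) = 0 if and only if H{c(p−1)/(b+c)}(a) = 0. -/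
/-!
`H_n` spans the polynomials of degree `≤ n` killed by the hypergeometric operator
`L_n = λ(1-λ)D² + (1-(1-2n)λ)D - n²` as soon as `n < p`: on coefficients `L_n y = 0` reads
`(k+1)² y_{k+1} = (n-k)² y_k`, which can be solved upwards because `k+1` is invertible for
`k < n`. Moving the factor `(1-λ)^d` through `L_{m+d}` produces `(1-λ)^d L_m` plus a multiple of
`d (2m+d+1)`. Hence when `(m+d) + m + 1 = p` the polynomial `(1-λ)^d H_m` is killed by
`L_{m+d}`, and `H_{m+d} = (1-λ)^d H_m` in characteristic `p`. For `a ≠ 1` the two values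
vanish together, and `b(p-1)/(b+c) + c(p-1)/(b+c) + 1 = p`.
-/

open Polynomial Finset

section
variable {R : Type*} [CommRing R]

theorem cast_succ_mul_choose_succ (n k : ℕ) :
    ((k : R) + 1) * (n.choose (k + 1) : R) = ((n : R) - k) * (n.choose k : R) := by
  rcases le_or_gt k n with h | h
  · have := congrArg (Nat.cast : ℕ → R) (Nat.choose_succ_right_eq n k)
    push_cast [Nat.cast_sub h] at this
    linear_combination this
  · simp [Nat.choose_eq_zero_of_lt h, Nat.choose_eq_zero_of_lt (Nat.lt_succ_of_lt h)]

/-- Gauss's hypergeometric operator with parameters `(-n, -n; 1)`. -/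
noncomputable def deuringOp (n : ℕ) (y : R[X]) : R[X] :=
  X * (1 - X) * derivative (derivative y) + (1 - C (1 - 2 * (n : R)) * X) * derivative y
    - C ((n : R) ^ 2) * y

theorem coeff_deuring (n k : ℕ) : (deuring R n).coeff k = (n.choose k : R) ^ 2 := by
  simp only [deuring, finsetSum_coeff, coeff_C_mul_X_pow, Finset.sum_ite_eq, Finset.mem_range]
  split_ifs with hk
  · rfl
  · rw [Nat.choose_eq_zero_of_lt (by omega), Nat.cast_zero, zero_pow two_ne_zero]

theorem natDegree_deuring_le (n : ℕ) : (deuring R n).natDegree ≤ n :=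
  natDegree_le_iff_coeff_eq_zero.mpr fun k hk => by
    rw [coeff_deuring, Nat.choose_eq_zero_of_lt (by exact_mod_cast hk), Nat.cast_zero,
      zero_pow two_ne_zero]

theorem coeff_deuringOp (n : ℕ) (y : R[X]) (k : ℕ) :
    (deuringOp n y).coeff k =
      ((k : R) + 1) ^ 2 * y.coeff (k + 1) - ((n : R) - k) ^ 2 * y.coeff k := by
  have e : deuringOp n y = X * derivative (derivative y) - X * (X * derivative (derivative y))
      + derivative y - C (1 - 2 * (n : R)) * (X * derivative y) - C ((n : R) ^ 2) * y := by
    rw [deuringOp]; ring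
  rw [e]
  rcases k with _ | _ | k <;>
    simp only [coeff_sub, coeff_add, coeff_C_mul, coeff_X_mul_zero, coeff_X_mul,
      coeff_derivative] <;> push_cast <;> ring

theorem deuringOp_deuring (n : ℕ) : deuringOp n (deuring R n) = 0 := by
  ext k
  rw [coeff_deuringOp, coeff_deuring, coeff_deuring, coeff_zero, ← mul_pow, ← mul_pow,
    cast_succ_mul_choose_succ, sub_self]

theorem deuringOp_one_sub_X_mul (m : ℕ) (v : R[X]) :
    deuringOp (m + 1) ((1 - X) * v) = (1 - X) * deuringOp m v - C (2 * (m : R) + 2) * v := by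
  simp only [deuringOp, derivative_mul, derivative_one, derivative_X, map_sub,
    map_mul, map_add, map_pow, map_natCast, map_one, map_ofNat, Nat.cast_succ, derivative_zero]
  ring

theorem deuringOp_one_sub_X_pow_mul (m d : ℕ) (v : R[X]) :
    deuringOp (m + d + 1) ((1 - X) ^ (d + 1) * v) =
      (1 - X) ^ (d + 1) * deuringOp m v
        - C (((d : R) + 1) * (2 * m + d + 2)) * ((1 - X) ^ d * v) := by
  induction d generalizing m v with
  | zero => simpa using deuringOp_one_sub_X_mul m v
  | succ d ih =>
    rw [show m + (d + 1) + 1 = m + 1 + d + 1 by omega, pow_succ, mul_assoc,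
      ih, deuringOp_one_sub_X_mul]
    simp only [map_mul, map_add, map_natCast, map_one, map_ofNat, Nat.cast_succ]
    ring

theorem eq_C_mul_deuring_of_deuringOp_eq_zero [IsDomain R] {p n : ℕ} [CharP R p] (hnp : n < p)
    {y : R[X]} (hy : deuringOp n y = 0) (hdeg : y.natDegree ≤ n) :
    y = C (y.coeff 0) * deuring R n := by
  ext k
  rw [coeff_C_mul, coeff_deuring]
  induction k with
  | zero => simp
  | succ k ih =>
    rcases le_or_gt (k + 1) n with hk | hk
    · have hrec := congrArg (coeff · k) hy
      simp only [coeff_deuringOp, coeff_zero, sub_eq_zero] at hrec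
      have hk0 : ((k : R) + 1) ^ 2 ≠ 0 := by
        refine pow_ne_zero 2 ?_
        exact_mod_cast (CharP.cast_eq_zero_iff R p (k + 1)).not.mpr
          (Nat.not_dvd_of_pos_of_lt k.succ_pos (by omega))
      apply mul_left_cancel₀ hk0
      rw [hrec, ih, ← mul_assoc, mul_left_comm, ← mul_pow, cast_succ_mul_choose_succ]
      ring
    · rw [coeff_eq_zero_of_natDegree_lt (by omega), Nat.choose_eq_zero_of_lt hk]
      simp

theorem deuring_eq_one_sub_X_pow_mul [IsDomain R] {p : ℕ} [CharP R p] (m d : ℕ)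
    (h : 2 * m + d + 1 = p) : deuring R (m + d) = (1 - X) ^ d * deuring R m := by
  obtain _ | d := d
  · simp
  have hop : deuringOp (m + (d + 1)) ((1 - X) ^ (d + 1) * deuring R m) = 0 := by
    have hp : ((2 * m + d + 2 : ℕ) : R) = 0 := by
      rw [show 2 * m + d + 2 = p by omega, CharP.cast_eq_zero]
    push_cast at hp
    rw [← add_assoc, deuringOp_one_sub_X_pow_mul, deuringOp_deuring, hp]
    simp
  have hdeg : ((1 - X : R[X]) ^ (d + 1) * deuring R m).natDegree ≤ m + (d + 1) := by
    refine natDegree_mul_le.trans (add_comm m _ ▸ add_le_add ?_ (natDegree_deuring_le m))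
    have h1 : (1 - X : R[X]).natDegree ≤ 1 := by simpa using natDegree_sub_le (1 : R[X]) X
    exact (natDegree_pow_le_of_le _ h1).trans_eq (mul_one _)
  rw [eq_C_mul_deuring_of_deuringOp_eq_zero (by omega) hop hdeg, mul_coeff_zero, coeff_deuring,
    coeff_zero_eq_eval_zero]
  simp

theorem eval_deuring_eq_zero_iff_of_le [IsDomain R] {p m n : ℕ} [CharP R p] (hmn : m ≤ n)
    (h : n + m + 1 = p) {a : R} (ha : a ≠ 1) :
    (deuring R n).eval a = 0 ↔ (deuring R m).eval a = 0 := by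
  obtain ⟨d, rfl⟩ := Nat.exists_eq_add_of_le hmn
  rw [deuring_eq_one_sub_X_pow_mul m d (by omega), eval_mul, mul_eq_zero, eval_pow, eval_sub,
    eval_one, eval_X, pow_eq_zero_iff', sub_eq_zero]
  simp [ha.symm]

theorem eval_deuring_eq_zero_iff [IsDomain R] {p m n : ℕ} [CharP R p] (h : n + m + 1 = p)
    {a : R} (ha : a ≠ 1) : (deuring R n).eval a = 0 ↔ (deuring R m).eval a = 0 := by
  rcases le_total m n with hmn | hnm
  · exact eval_deuring_eq_zero_iff_of_le hmn h ha
  · exact (eval_deuring_eq_zero_iff_of_le hnm (by omega) ha).symm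

end

theorem deuring_root_symm_general (p : ℕ) [Fact p.Prime]
    (b c : ℕ) (hmod : p % (b + c) = 1)
    (a : AlgebraicClosure (ZMod p)) (ha1 : a ≠ 1) :
    (deuring (AlgebraicClosure (ZMod p)) (b * (p - 1) / (b + c))).eval a = 0 ↔
      (deuring (AlgebraicClosure (ZMod p)) (c * (p - 1) / (b + c))).eval a = 0 := by
  have hp := (Fact.out : p.Prime).two_le
  have hbc : 0 < b + c := Nat.pos_of_ne_zero fun h => by rw [h, Nat.mod_zero] at hmod; omega
  obtain ⟨q, hq⟩ : b + c ∣ p - 1 := hmod ▸ Nat.dvd_sub_mod p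
  have hdiv (e : ℕ) : e * (p - 1) / (b + c) = e * q := by
    rw [hq, mul_left_comm, Nat.mul_div_cancel_left _ hbc]
  rw [hdiv, hdiv]
  refine eval_deuring_eq_zero_iff (p := p) ?_ ha1
  rw [← add_mul, ← hq]
  omega

theorem deuring_root_symm (p : ℕ) [Fact p.Prime] (hp2 : 2 < p)
    (b c : ℕ) (hb : 0 < b) (hc : 0 < c) (hmod : p % (b + c) = 1)
    (a : AlgebraicClosure (ZMod p)) (ha0 : a ≠ 0) (ha1 : a ≠ 1) :
    (deuring (AlgebraicClosure (ZMod p)) (b * (p - 1) / (b + c))).eval a = 0 ↔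
      (deuring (AlgebraicClosure (ZMod p)) (c * (p - 1) / (b + c))).eval a = 0 :=
  deuring_root_symm_general p b c hmod a ha1
end
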